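/- arXiv:2204.04474 — 9 statements merged into one kernel-verified Lean document; each statement's English description precedes it below -/
import Mathlib

section
/- Let E/F be a (not necessarily Galois) extension of algebraic number fields of relative degree d = [E:F], and let A be a nonzero element of the ring of integers O_E of E. Then there exists an ideal n of O_F with (A·O_E)^d = n·O_E (i.e., the principal ideal A·O_E is ambiguous with respect to E/F) if and only if the quotient A^d / N_{E/F}(A) is a unit of O_E, i.e., if and only if there exists a unit U ∈ O_E^× with A^d = N_{E/F}(A)·U. -/
/-!
Taking relative ideal norms in `(A)^d = 𝔫 𝓞_E` gives `(N A)^d = 𝔫^d`, since the norm of an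
extended ideal `𝔫 𝓞_E` is `𝔫^d`. Ideals of a Dedekind domain factor uniquely, so `d`-th powers
cancel and `𝔫 = (N A)`; then `(A^d) = (N A)` means that `A^d` and `N A` differ by a unit.
-/

open NumberField Module

namespace Ideal

variable {R S : Type*} [CommRing R] [IsDedekindDomain R] [CommRing S] [IsDedekindDomain S]
  [Algebra R S] [Module.Finite R S] [IsTorsionFree R S]

theorem eq_span_intNorm_of_span_singleton_pow_finrank_eq_map {a : S} {n : Ideal R}
    (h : span {a} ^ finrank R S = n.map (algebraMap R S)) :
    n = span {Algebra.intNorm R S a} := by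
  rw [← pow_left_inj (finrank_pos (R := R) (M := S)).ne', ← relNorm_algebraMap S n, ← h,
    map_pow, relNorm_singleton]

theorem exists_span_singleton_pow_finrank_eq_map_iff_associated {a : S} :
    (∃ n : Ideal R, span {a} ^ finrank R S = n.map (algebraMap R S)) ↔
      Associated (a ^ finrank R S) (algebraMap R S (Algebra.intNorm R S a)) := by
  rw [← span_singleton_eq_span_singleton, ← span_singleton_pow, ← Set.image_singleton,
    ← map_span]
  refine ⟨fun ⟨n, hn⟩ ↦ ?_, fun h ↦ ⟨_, h⟩⟩
  rw [hn, ← eq_span_intNorm_of_span_singleton_pow_finrank_eq_map hn]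

end Ideal

theorem NumberField.RingOfIntegers.intNorm_eq_norm (F E : Type*) [Field F] [NumberField F]
    [Field E] [NumberField E] [Algebra F E] :
    Algebra.intNorm (𝓞 F) (𝓞 E) = RingOfIntegers.norm F := by
  ext a
  exact Algebra.algebraMap_intNorm (A := 𝓞 F) (K := F) (L := E) a

theorem ambiguous_principal_ideal_iff_power_div_norm_is_unit_general
    (F E : Type*) [Field F] [NumberField F] [Field E] [NumberField E]
    [Algebra F E] (d : ℕ) (hd : d = Module.finrank F E)
    (A : 𝓞 E) :
    (∃ n : Ideal (𝓞 F),
        (Ideal.span {A} : Ideal (𝓞 E)) ^ d = Ideal.map (algebraMap (𝓞 F) (𝓞 E)) n) ↔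
      ∃ U : (𝓞 E)ˣ,
        ((A : E)) ^ d = algebraMap F E (Algebra.norm F ((A : E))) * (((U : 𝓞 E) : E)) := by
  rw [hd, IsFractionRing.finrank_eq (𝓞 F) F (𝓞 E) E,
    Ideal.exists_span_singleton_pow_finrank_eq_map_iff_associated,
    RingOfIntegers.intNorm_eq_norm, Associated.comm]
  refine exists_congr fun U ↦ ?_
  rw [eq_comm, ← RingOfIntegers.coe_algebraMap_norm]
  norm_cast

/-- **Ambiguous principal ideals.** For an extension `E/F` of number fields of relative
degree `d = [E : F]` and a nonzero algebraic integer `A` of `E`, the principal ideal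
`A·𝓞 E` is ambiguous with respect to `E/F` (i.e. its `d`-th power is the extension of an
ideal of `𝓞 F`) if and only if `A ^ d / N_{E/F}(A)` is a unit of `𝓞 E`. -/
theorem ambiguous_principal_ideal_iff_power_div_norm_is_unit
    (F E : Type*) [Field F] [NumberField F] [Field E] [NumberField E]
    [Algebra F E] (d : ℕ) (hd : d = Module.finrank F E)
    (A : 𝓞 E) (hA : A ≠ 0) :
    (∃ n : Ideal (𝓞 F),
        (Ideal.span {A} : Ideal (𝓞 E)) ^ d = Ideal.map (algebraMap (𝓞 F) (𝓞 E)) n) ↔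
      ∃ U : (𝓞 E)ˣ,
        ((A : E)) ^ d = algebraMap F E (Algebra.norm F ((A : E))) * (((U : 𝓞 E) : E)) :=
  ambiguous_principal_ideal_iff_power_div_norm_is_unit_general F E d hd A
end

section
/- Let F be an algebraic number field with ring of integers O_F, and let P(X) = X^d + aX^t − b ∈ O_F[X] be a monic irreducible trinomial with exponents d > t ≥ 1 whose middle coefficient is divisible by the absolute coefficient, say a = v·b with v ∈ O_F. Let θ be a root of P and E = F(θ), so [E:F] = d. Then: (i) N_{E/F}(θ) = (−1)^{d−1}·b; (ii) U := (−1)^{d−1}(1 − v·θ^t) is a unit of the ring of integers O_E; and (iii) θ generates an ambiguous principal ideal of E/F, i.e., (θ·O_E)^d = (b·O_F)·O_E. -/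
open NumberField Polynomial

/-!
As `P` is the minimal polynomial of `θ` and `θ` generates `E`,
`N(θ) = (-1)^d P(0) = (-1)^(d-1) b`. Because `a = v b`, the equation `P(θ) = 0` reads
`θ^d = b (1 - v θ^t)`. Taking norms, `b^d` and `b^d N(1 - v θ^t)` are associated, so
`1 - v θ^t` has unit norm and is a unit of `𝓞 E`; hence `(θ)^d = (θ^d) = (b)`.
-/

namespace Polynomial

section Trinomial

variable {R : Type*} [CommRing R] {d t : ℕ} (a b : R)

theorem degree_C_mul_X_pow_sub_C_lt (htd : t < d) : (C a * X ^ t - C b : R[X]).degree < d :=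
  (degree_sub_le _ _).trans_lt <| max_lt
    ((degree_C_mul_X_pow_le _ _).trans_lt (by exact_mod_cast htd))
    (degree_C_le.trans_lt (by exact_mod_cast t.zero_le.trans_lt htd))

theorem monic_X_pow_add_C_mul_X_pow_sub_C (htd : t < d) :
    (X ^ d + C a * X ^ t - C b : R[X]).Monic := by
  rw [add_sub_assoc]
  exact monic_X_pow_add (degree_C_mul_X_pow_sub_C_lt a b htd)

theorem natDegree_X_pow_add_C_mul_X_pow_sub_C [Nontrivial R] (htd : t < d) :
    (X ^ d + C a * X ^ t - C b : R[X]).natDegree = d := by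
  rw [add_sub_assoc, natDegree_add_eq_left_of_degree_lt, natDegree_X_pow]
  exact (degree_C_mul_X_pow_sub_C_lt a b htd).trans_eq (degree_X_pow d).symm

theorem coeff_zero_X_pow_add_C_mul_X_pow_sub_C (hd : d ≠ 0) (ht : t ≠ 0) :
    (X ^ d + C a * X ^ t - C b : R[X]).coeff 0 = -b := by
  simp [coeff_X_pow, coeff_C, hd.symm, ht.symm]

theorem pow_eq_algebraMap_mul_one_sub_of_aeval_eq_zero {A : Type*} [CommRing A] [Algebra R A]
    {v : R} {x : A} (h : aeval x (X ^ d + C (v * b) * X ^ t - C b) = 0) :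
    x ^ d = algebraMap R A b * (1 - algebraMap R A v * x ^ t) := by
  simp only [map_sub, map_add, map_mul, map_pow, aeval_X, aeval_C] at h
  linear_combination h

end Trinomial

theorem coeff_zero_ne_zero_of_irreducible {K : Type*} [Field K] {p : K[X]}
    (hp : Irreducible p) (hdeg : p.natDegree ≠ 1) : p.coeff 0 ≠ 0 := by
  intro h0
  obtain ⟨q, hq⟩ := X_dvd_iff.2 h0
  have hqu : IsUnit q := (hp.isUnit_or_isUnit hq).resolve_left not_isUnit_X
  have hX : Associated X p := ⟨hqu.unit, hq.symm⟩
  exact hdeg <|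
    (natDegree_eq_of_degree_eq (degree_eq_degree_of_associated hX)).symm.trans natDegree_X

end Polynomial

section AdjoinSimple

variable {K L : Type*} [Field K] [Field L] [Algebra K L] {x : L}

noncomputable def PowerBasis.ofAdjoinSimpleEqTop (hx : IsIntegral K x)
    (hgen : IntermediateField.adjoin K {x} = ⊤) : PowerBasis K L :=
  (IntermediateField.adjoin.powerBasis hx).map
    ((IntermediateField.equivOfEq hgen).trans IntermediateField.topEquiv)

@[simp]
theorem PowerBasis.ofAdjoinSimpleEqTop_gen (hx : IsIntegral K x)
    (hgen : IntermediateField.adjoin K {x} = ⊤) :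
    (PowerBasis.ofAdjoinSimpleEqTop hx hgen).gen = x := by
  simp [PowerBasis.ofAdjoinSimpleEqTop, IntermediateField.adjoin.powerBasis]

@[simp]
theorem PowerBasis.ofAdjoinSimpleEqTop_dim (hx : IsIntegral K x)
    (hgen : IntermediateField.adjoin K {x} = ⊤) :
    (PowerBasis.ofAdjoinSimpleEqTop hx hgen).dim = (minpoly K x).natDegree := by
  simp [PowerBasis.ofAdjoinSimpleEqTop, IntermediateField.adjoin.powerBasis]

theorem IntermediateField.finrank_eq_natDegree_minpoly_of_adjoin_eq_top (hx : IsIntegral K x)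
    (hgen : IntermediateField.adjoin K {x} = ⊤) :
    Module.finrank K L = (minpoly K x).natDegree := by
  rw [(PowerBasis.ofAdjoinSimpleEqTop hx hgen).finrank, PowerBasis.ofAdjoinSimpleEqTop_dim]

theorem Algebra.norm_eq_neg_one_pow_mul_coeff_zero_of_adjoin_eq_top (hx : IsIntegral K x)
    (hgen : IntermediateField.adjoin K {x} = ⊤) :
    Algebra.norm K x = (-1) ^ (minpoly K x).natDegree * (minpoly K x).coeff 0 := by
  simpa using Algebra.PowerBasis.norm_gen_eq_coeff_zero_minpoly
    (PowerBasis.ofAdjoinSimpleEqTop hx hgen)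

end AdjoinSimple

theorem NumberField.RingOfIntegers.isUnit_of_pow_finrank_eq_algebraMap_mul {K L : Type*}
    [Field K] [CharZero K] [Field L] [Algebra K L] [FiniteDimensional K L]
    {x w : 𝓞 L} {b : 𝓞 K} (hb : b ≠ 0) (hx : Associated (RingOfIntegers.norm K x) b)
    (h : x ^ Module.finrank K L = algebraMap (𝓞 K) (𝓞 L) b * w) : IsUnit w := by
  have hnorm := congrArg (RingOfIntegers.norm K) h
  rw [map_pow, map_mul, RingOfIntegers.norm_algebraMap] at hnorm
  have hassoc : Associated (b ^ Module.finrank K L * RingOfIntegers.norm K w)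
      (b ^ Module.finrank K L * 1) := by
    rw [← hnorm, mul_one]
    exact hx.pow_pow
  exact (RingOfIntegers.isUnit_norm K).1 (associated_one_iff_isUnit.1
    (hassoc.of_mul_left (Associated.refl _) (pow_ne_zero _ hb)))

theorem Ideal.span_singleton_pow_eq_map_span_singleton {R S : Type*} [CommRing R] [CommRing S]
    [Algebra R S] {x w : S} {b : R} {n : ℕ} (hw : IsUnit w)
    (h : x ^ n = algebraMap R S b * w) :
    Ideal.span {x} ^ n = (Ideal.span {b}).map (algebraMap R S) := by
  rw [Ideal.map_span, Set.image_singleton, Ideal.span_singleton_pow, h,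
    Ideal.span_singleton_mul_right_unit hw]

theorem trinomial_root_generates_ambiguous_principal_ideal_general
    (F E : Type*) [Field F] [NumberField F] [Field E] [NumberField E]
    [Algebra F E]
    (d t : ℕ) (hdt : t < d) (ht : 1 ≤ t)
    (a b v : 𝓞 F) (hab : a = v * b)
    (P : Polynomial F) (hP : P = X ^ d + C (a : F) * X ^ t - C (b : F))
    (hirr : Irreducible P)
    (θ : 𝓞 E) (hroot : Polynomial.aeval ((θ : E)) P = 0)
    (hgen : IntermediateField.adjoin F {((θ : E))} = ⊤) :
    Algebra.norm F ((θ : E)) = (-1 : F) ^ (d - 1) * (b : F) ∧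
    IsUnit ((-1 : 𝓞 E) ^ (d - 1) * (1 - algebraMap (𝓞 F) (𝓞 E) v * θ ^ t)) ∧
    (Ideal.span {θ} : Ideal (𝓞 E)) ^ d =
      Ideal.map (algebraMap (𝓞 F) (𝓞 E)) (Ideal.span {b}) := by
  have hmonic : P.Monic := hP ▸ monic_X_pow_add_C_mul_X_pow_sub_C _ _ hdt
  have hint : IsIntegral F (θ : E) := ⟨P, hmonic, hroot⟩
  have hmin : minpoly F (θ : E) = P :=
    (minpoly.eq_of_irreducible_of_monic hirr hroot hmonic).symm
  have hdegP : P.natDegree = d := hP ▸ natDegree_X_pow_add_C_mul_X_pow_sub_C _ _ hdt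
  have hcoeff : P.coeff 0 = -b :=
    hP ▸ coeff_zero_X_pow_add_C_mul_X_pow_sub_C _ _ (by omega) (by omega)
  have hnorm : Algebra.norm F (θ : E) = (-1) ^ (d - 1) * b := by
    rw [Algebra.norm_eq_neg_one_pow_mul_coeff_zero_of_adjoin_eq_top hint hgen, hmin, hdegP,
      hcoeff]
    obtain ⟨n, rfl⟩ : ∃ n, d = n + 1 := ⟨d - 1, by omega⟩
    simp [pow_succ]
  have hb : b ≠ 0 := by
    have := coeff_zero_ne_zero_of_irreducible hirr (by omega)
    rw [hcoeff, neg_ne_zero] at this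
    exact_mod_cast this
  have hrel :
      θ ^ d = algebraMap (𝓞 F) (𝓞 E) b * (1 - algebraMap (𝓞 F) (𝓞 E) v * θ ^ t) := by
    rw [hP, hab] at hroot
    apply RingOfIntegers.coe_injective
    simp only [map_pow, map_mul, map_sub, map_one]
    exact pow_eq_algebraMap_mul_one_sub_of_aeval_eq_zero (b : F) (v := (v : F))
      (by simpa using hroot)
  have hnormθ : Associated (RingOfIntegers.norm F θ) b := by
    have : RingOfIntegers.norm F θ = (-1) ^ (d - 1) * b :=
      RingOfIntegers.coe_injective (by simpa using hnorm)
    exact this ▸ associated_unit_mul_left b _ (isUnit_one.neg.pow _)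
  have hw : IsUnit (1 - algebraMap (𝓞 F) (𝓞 E) v * θ ^ t) :=
    RingOfIntegers.isUnit_of_pow_finrank_eq_algebraMap_mul hb hnormθ
      (by rwa [IntermediateField.finrank_eq_natDegree_minpoly_of_adjoin_eq_top hint hgen, hmin,
        hdegP])
  exact ⟨hnorm, (isUnit_one.neg.pow _).mul hw,
    Ideal.span_singleton_pow_eq_map_span_singleton hw hrel⟩

/-- For a monic irreducible trinomial `P(X) = X^d + a·X^t − b` over the ring of integers
of a number field `F`, with `d > t ≥ 1` and middle coefficient `a = v·b` divisible by the
absolute coefficient `b`, a root `θ` of `P` generating the extension `E = F(θ)` of degree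
`d` satisfies: (i) `N_{E/F}(θ) = (−1)^(d−1)·b`; (ii) `(−1)^(d−1)·(1 − v·θ^t)` is a unit of
`𝓞 E`; (iii) `θ` generates an ambiguous principal ideal: `(θ·𝓞 E)^d = (b·𝓞 F)·𝓞 E`. -/
theorem trinomial_root_generates_ambiguous_principal_ideal
    (F E : Type*) [Field F] [NumberField F] [Field E] [NumberField E]
    [Algebra F E]
    (d t : ℕ) (hdt : t < d) (ht : 1 ≤ t)
    (a b v : 𝓞 F) (hab : a = v * b)
    (P : Polynomial F) (hP : P = X ^ d + C (a : F) * X ^ t - C (b : F))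
    (hirr : Irreducible P)
    (θ : 𝓞 E) (hroot : Polynomial.aeval ((θ : E)) P = 0)
    (hgen : IntermediateField.adjoin F {((θ : E))} = ⊤)
    (hdeg : Module.finrank F E = d) :
    Algebra.norm F ((θ : E)) = (-1 : F) ^ (d - 1) * (b : F) ∧
    IsUnit ((-1 : 𝓞 E) ^ (d - 1) * (1 - algebraMap (𝓞 F) (𝓞 E) v * θ ^ t)) ∧
    (Ideal.span {θ} : Ideal (𝓞 E)) ^ d =
      Ideal.map (algebraMap (𝓞 F) (𝓞 E)) (Ideal.span {b}) :=
  trinomial_root_generates_ambiguous_principal_ideal_general F E d t hdt ht a b v hab P hP hirr θ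
    hroot hgen
end

section
/- Let σ ∈ {−1, +1} and let r, b be positive integers with b squarefree and with 3-adic valuation v₃(b² + 3σrb − 1) = 1 (the monogeneity condition). Set ∂ = 4σr³b + 1. Then: (i) if 3 divides b, then 3 does not divide ∂; (ii) if 3 does not divide b and 3 divides σrb + 1, then v₃(∂) = 1 (i.e., 3 divides ∂ but 9 does not); (iii) if 3 divides neither b nor σrb + 1, then 3 does not divide ∂. -/
lemma padicValInt_three_eq_one_iff (z : ℤ) (hz : z ≠ 0) :
    padicValInt 3 z = 1 ↔ (3 : ℤ) ∣ z ∧ ¬ (9 : ℤ) ∣ z := by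
  have h3 : Fact (Nat.Prime 3) := ⟨by norm_num⟩
  have h1 : (3 : ℤ) ∣ z ↔ ((3 : ℕ) : ℤ) ^ 1 ∣ z := by norm_num
  have h2 : (9 : ℤ) ∣ z ↔ ((3 : ℕ) : ℤ) ^ 2 ∣ z := by norm_num
  rw [h1, h2, padicValInt_dvd_iff, padicValInt_dvd_iff]
  simp only [hz, false_or]
  omega

lemma zmod9_key (σ : ℤ) (hσ : σ = 1 ∨ σ = -1) (x y : ZMod 9)
    (hy : ZMod.castHom (show (3:ℕ) ∣ 9 by norm_num) (ZMod 3) y ≠ 0)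
    (hrb : ZMod.castHom (show (3:ℕ) ∣ 9 by norm_num) (ZMod 3) ((σ : ZMod 9) * x * y + 1) = 0)
    (hmono : y ^ 2 + 3 * (σ : ZMod 9) * x * y - 1 ≠ 0) :
    4 * (σ : ZMod 9) * x ^ 3 * y + 1 ≠ 0 := by
  rcases hσ with h | h <;> subst h <;> push_cast at * <;> revert hy hrb hmono <;>
    revert x y <;> decide

/-- Let `σ = ±1` and `r, b > 0` with `b` squarefree and `v₃(b² + 3σrb − 1) = 1` (the
monogeneity condition), and set `∂ = 4σr³b + 1`. Then: (i) if `3 ∣ b` then `3 ∤ ∂`;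
(ii) if `3 ∤ b` and `3 ∣ (σrb + 1)` then `v₃(∂) = 1` (i.e., 3 divides ∂ but 9 does not); (iii) if `3 ∤ b` and `3 ∤ (σrb + 1)` then `3 ∤ ∂`. -/
theorem dual_discriminant_three_adic_valuation
    (σ r b : ℤ) (hσ : σ = 1 ∨ σ = -1) (hr : 0 < r) (hb : 0 < b) (hsf : Squarefree b)
    (hmono : padicValInt 3 (b ^ 2 + 3 * σ * r * b - 1) = 1) :
    ((3 : ℤ) ∣ b → ¬ (3 : ℤ) ∣ (4 * σ * r ^ 3 * b + 1)) ∧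
    (¬ (3 : ℤ) ∣ b → (3 : ℤ) ∣ (σ * r * b + 1) →
      padicValInt 3 (4 * σ * r ^ 3 * b + 1) = 1) ∧
    (¬ (3 : ℤ) ∣ b → ¬ (3 : ℤ) ∣ (σ * r * b + 1) →
      ¬ (3 : ℤ) ∣ (4 * σ * r ^ 3 * b + 1)) := by
  have hN : b ^ 2 + 3 * σ * r * b - 1 ≠ 0 := by
    intro h
    rw [h] at hmono
    simp [padicValInt] at hmono
  have hD : 4 * σ * r ^ 3 * b + 1 ≠ 0 := by
    intro h
    have : (4 : ℤ) ∣ 1 := ⟨-(σ * r ^ 3 * b), by linarith⟩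
    norm_num at this
  obtain ⟨h3N, h9N⟩ := (padicValInt_three_eq_one_iff _ hN).mp hmono
  have h3 : (3 : ℤ) = ((3 : ℕ) : ℤ) := by norm_num
  refine ⟨?_, ?_, ?_⟩
  · intro h3b hd
    rw [h3, ← ZMod.intCast_zmod_eq_zero_iff_dvd] at h3b hd
    push_cast at h3b hd
    rcases hσ with h | h <;> subst h <;>
      revert h3b hd <;> push_cast <;> generalize (r : ZMod 3) = x <;>
      generalize (b : ZMod 3) = y <;> revert x y <;> decide
  · intro h3b hrb
    rw [padicValInt_three_eq_one_iff _ hD]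
    constructor
    · rw [h3, ← ZMod.intCast_zmod_eq_zero_iff_dvd] at hrb ⊢
      push_cast at hrb ⊢
      rcases hσ with h | h <;> subst h <;>
        revert hrb <;> push_cast <;> generalize (r : ZMod 3) = x <;>
        generalize (b : ZMod 3) = y <;> revert x y <;> decide
    · intro h9d
      have h9 : (9 : ℤ) = ((9 : ℕ) : ℤ) := by norm_num
      rw [h9, ← ZMod.intCast_zmod_eq_zero_iff_dvd] at h9d h9N
      rw [h3, ← ZMod.intCast_zmod_eq_zero_iff_dvd] at h3b hrb
      push_cast at h9d h9N h3b hrb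
      refine zmod9_key σ hσ (r : ZMod 9) (b : ZMod 9) ?_ ?_ ?_ ?_
      · rwa [show ((ZMod.castHom (show (3:ℕ) ∣ 9 by norm_num) (ZMod 3)) ((b : ℤ) : ZMod 9)) = ((b : ℤ) : ZMod 3) from map_intCast _ b]
      · rw [show ((σ : ZMod 9) * (r : ℤ) * (b : ℤ) + 1 : ZMod 9) = (((σ * r * b + 1 : ℤ) : ZMod 9)) by push_cast; ring,
          map_intCast]
        push_cast
        rwa [show ((σ : ZMod 3) * (r : ℤ) * (b : ℤ) + 1 : ZMod 3) = ((σ : ZMod 3) * r * b + 1) by push_cast; ring]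
      · intro h
        exact h9N (by linear_combination h)
      · exact h9d
  · intro h3b hrb hd
    rw [h3, ← ZMod.intCast_zmod_eq_zero_iff_dvd] at h3b hrb hd
    push_cast at h3b hrb hd
    rcases hσ with h | h <;> subst h <;>
      revert h3b hrb hd <;> push_cast <;> generalize (r : ZMod 3) = x <;>
      generalize (b : ZMod 3) = y <;> revert x y <;> decide
end

section
/- Let r ≥ 1 and b ≥ 2 be integers with b squarefree, such that P(X) = X³ + 3rbX − b ∈ ℤ[X] is irreducible and monogenic, i.e., the ring of integers O_L of L = ℚ(θ) equals ℤ[θ] for the real root θ of P. Let ι : L → ℝ be the real embedding (with ι(θ) the real root of P) and τ : L → ℂ a complex embedding of L. Then there is no nonzero ν ∈ O_L with |ι(ν)| < ι(θ) and |τ(ν)| < |τ(θ)|; that is, θ is always a lattice minimum of O_L. -/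
/-!
Write `ν = u + vθ + wθ²` (monogenicity) and put `t = ι θ`, `z = τ θ`, `c = 3rb`. As `τ` is not
real, `z ≠ t`, so `z` is a root of `X² + tX + (t² + c)`; reducing modulo this quadratic,
`τ ν = D + Cz` with `D = u - w(t² + c)`, `C = v - wt`, and `|τ ν|² = D² - DCt + C²(t² + c)` while
`|z|² = t² + c`. The bound `|τ ν| < |z|` then gives `C² < 4/3` and `(D - Ct/2)² < t² + c`.
Since `|ι ν| < t` forces `t > 0`, the cubic gives `t < 1/3` and `c ≥ 3`, and the identity
`w(3t² + c) = ι ν - (D - Ct/2) - (3/2)tC` leaves no room for `w ≠ 0`. For `w = 0` the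
inequalities `|u + vt| < t` and `v² < 4/3` force `u = v = 0`.
-/

open NumberField Polynomial

theorem Polynomial.exists_aeval_eq_sum_range_natDegree {R S : Type*} [CommRing R] [CommRing S]
    [Algebra R S] {q : R[X]} (hq : q.Monic) {x : S} (hx : aeval x q = 0) (p : R[X]) :
    ∃ a : ℕ → R, aeval x p = ∑ i ∈ Finset.range q.natDegree, a i • x ^ i := by
  rcases eq_or_ne q 1 with rfl | hq1
  · have : Subsingleton S := subsingleton_of_zero_eq_one (by simpa using hx.symm)
    exact ⟨0, Subsingleton.elim _ _⟩
  refine ⟨(p %ₘ q).coeff, ?_⟩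
  rw [← aeval_modByMonic_eq_self_of_root hx,
    aeval_eq_sum_range' (natDegree_modByMonic_lt p hq hq1)]

theorem exists_int_eq_of_mem_adjoin_of_cubic {S : Type*} [CommRing S] {A B : ℤ} {x : S}
    (hx : x ^ 3 + A * x - B = 0) {y : S} (hy : y ∈ Algebra.adjoin ℤ {x}) :
    ∃ u v w : ℤ, y = u + v * x + w * x ^ 2 := by
  rw [Algebra.adjoin_singleton_eq_range_aeval] at hy
  obtain ⟨p, rfl⟩ := hy
  have hmonic : (X ^ 3 + C A * X - C B : ℤ[X]).Monic := by monicity!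
  have hdeg : (X ^ 3 + C A * X - C B : ℤ[X]).natDegree = 3 := by compute_degree!
  have hroot : aeval x (X ^ 3 + C A * X - C B) = 0 := by simpa using hx
  obtain ⟨a, ha⟩ := exists_aeval_eq_sum_range_natDegree hmonic hroot p
  refine ⟨a 0, a 1, a 2, ?_⟩
  change aeval x p = _
  rw [ha, hdeg]
  simp [Finset.sum_range_succ]

theorem NumberField.ComplexEmbedding.isReal_of_adjoin_eq_top {K : Type*} [Field K] [CharZero K]
    {α : K} (hα : IntermediateField.adjoin ℚ {α} = ⊤) {φ : K →+* ℂ} (h : (φ α).im = 0) :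
    ComplexEmbedding.IsReal φ := by
  rw [ComplexEmbedding.isReal_iff]
  let top : (⊤ : IntermediateField ℚ K) →ₐ[ℚ] K := IntermediateField.topEquiv.toAlgHom
  have key := IntermediateField.algHom_ext_of_eq_adjoin ℚ hα.symm
    (φ₁ := (ComplexEmbedding.conjugate φ).toRatAlgHom.comp top) (φ₂ := φ.toRatAlgHom.comp top)
    (by rintro x rfl; exact Complex.conj_eq_iff_im.mpr h)
  ext x
  exact congr($key ⟨x, trivial⟩)

theorem sq_add_mul_add_eq_zero_of_cubic {K : Type*} [Field K] {c b x y : K}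
    (hx : x ^ 3 + c * x - b = 0) (hy : y ^ 3 + c * y - b = 0) (hne : y ≠ x) :
    y ^ 2 + x * y + (x ^ 2 + c) = 0 :=
  (mul_eq_zero.mp (by linear_combination hy - hx : (y - x) * (y ^ 2 + x * y + (x ^ 2 + c)) = 0))
    |>.resolve_left (sub_ne_zero.mpr hne)

theorem Complex.normSq_add_mul_of_sq_add_mul_add_eq_zero {t s : ℝ} {z : ℂ} (hs : t ^ 2 < 4 * s)
    (hz : z ^ 2 + t * z + s = 0) (a b : ℝ) :
    Complex.normSq (a + b * z) = a ^ 2 - a * b * t + b ^ 2 * s := by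
  have hre := congr(Complex.re $hz)
  have him := congr(Complex.im $hz)
  simp only [sq, Complex.add_re, Complex.mul_re, Complex.add_im, Complex.mul_im, Complex.ofReal_re,
    Complex.ofReal_im, Complex.zero_re, Complex.zero_im] at hre him
  have hx : z.re = -t / 2 := by
    have : z.im * (2 * z.re + t) = 0 := by linear_combination him
    rcases mul_eq_zero.mp this with hy | hx
    · nlinarith [sq_nonneg (z.re + t / 2)]
    · linarith
  rw [Complex.normSq_apply]
  simp only [Complex.add_re, Complex.mul_re, Complex.add_im, Complex.mul_im, Complex.ofReal_re,
    Complex.ofReal_im]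
  rw [hx] at hre ⊢
  linear_combination (-b ^ 2) * hre

theorem Complex.norm_form_lt_of_norm_lt {t s : ℝ} {z : ℂ} (hs : t ^ 2 < 4 * s)
    (hz : z ^ 2 + t * z + s = 0) {u v w : ℤ} (h : ‖u + v * z + w * z ^ 2‖ < ‖z‖) :
    (u - w * s) ^ 2 - (u - w * s) * (v - w * t) * t + (v - w * t) ^ 2 * s < s := by
  have hreduce :
      (u + v * z + w * z ^ 2 : ℂ) = ((u - w * s : ℝ) : ℂ) + ((v - w * t : ℝ) : ℂ) * z := by
    push_cast
    linear_combination (w : ℂ) * hz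
  have hz' : normSq z = s := by simpa using normSq_add_mul_of_sq_add_mul_add_eq_zero hs hz 0 1
  have hnormSq := pow_lt_pow_left₀ h (norm_nonneg _) two_ne_zero
  rwa [← normSq_eq_norm_sq, ← normSq_eq_norm_sq, hreduce,
    normSq_add_mul_of_sq_add_mul_add_eq_zero hs hz, hz'] at hnormSq

theorem lt_one_third_and_three_le_of_cubic {r b : ℕ} (hr : 1 ≤ r) {t : ℝ} (ht : 0 < t)
    (h : t ^ 3 + ((3 * r * b : ℕ) : ℝ) * t - b = 0) : t < 1 / 3 ∧ 3 ≤ ((3 * r * b : ℕ) : ℝ) := by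
  have hr' : (1 : ℝ) ≤ r := by exact_mod_cast hr
  push_cast at h ⊢
  have hb : (1 : ℝ) ≤ b := by
    have : 0 ≤ 3 * r * b * t := by positivity
    have hb0 : (0 : ℝ) < b := by nlinarith [pow_pos ht 3]
    exact Nat.one_le_cast.mpr (Nat.cast_pos.mp hb0)
  have : 0 ≤ (r - 1) * b * t := by have := sub_nonneg.2 hr'; positivity
  constructor <;> nlinarith [pow_pos ht 3]

theorem Int.eq_zero_of_abs_cast_lt_one {n : ℤ} (h : |(n : ℝ)| < 1) : n = 0 :=
  Int.abs_lt_one_iff.mp (by exact_mod_cast h)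

theorem coeff_sq_eq_zero_of_abs_lt_of_sq_lt {t c : ℝ} {u v w : ℤ} (ht : t < 1 / 3) (hc : 3 ≤ c)
    (hι : |u + v * t + w * t ^ 2| < t)
    (hR : (u - w * (t ^ 2 + c) - (v - w * t) * t / 2) ^ 2 < t ^ 2 + c)
    (hC : ((v : ℝ) - w * t) ^ 2 < 4 / 3) :
    w = 0 := by
  have ht0 : 0 < t := (abs_nonneg _).trans_lt hι
  have hpos : 0 < 3 * t ^ 2 + c := by positivity
  set C : ℝ := v - w * t
  set R : ℝ := u - w * (t ^ 2 + c) - C * t / 2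
  have hC : |C| ≤ 7 / 6 := abs_le_of_sq_le_sq (by linarith) (by norm_num)
  have hR : |R| ≤ (t ^ 2 + c + 1) / 2 :=
    abs_le_of_sq_le_sq (by nlinarith [sq_nonneg (t ^ 2 + c - 1)]) (by positivity)
  have hw : |(w : ℝ)| * (3 * t ^ 2 + c) < 1 * (3 * t ^ 2 + c) :=
    calc |(w : ℝ)| * (3 * t ^ 2 + c) = |w * (3 * t ^ 2 + c)| := by rw [abs_mul, abs_of_pos hpos]
      _ = |(u + v * t + w * t ^ 2) - R - 3 / 2 * t * C| := by congr 1; simp only [R, C]; ring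
      _ ≤ |u + v * t + w * t ^ 2| + |R| + 3 / 2 * t * |C| := by
          grw [abs_sub, abs_sub, abs_mul, abs_of_pos (by positivity : 0 < 3 / 2 * t)]
      _ < 1 * (3 * t ^ 2 + c) := by nlinarith
  exact Int.eq_zero_of_abs_cast_lt_one (lt_of_mul_lt_mul_right hw hpos.le)

theorem eq_zero_of_abs_add_mul_lt {t : ℝ} {u v : ℤ} (ht : t < 1 / 3)
    (hι : |u + v * t| < t) (hv : (v : ℝ) ^ 2 < 4 / 3) : u = 0 ∧ v = 0 := by
  have ht0 : 0 < t := (abs_nonneg _).trans_lt hι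
  have hv : |(v : ℝ)| ≤ 1 := by
    have : v ^ 2 < 2 := by exact_mod_cast (by linarith : (v : ℝ) ^ 2 < 2)
    exact (sq_le_one_iff_abs_le_one _).mp (by exact_mod_cast (by omega : v ^ 2 ≤ 1))
  have hu : u = 0 := by
    refine Int.eq_zero_of_abs_cast_lt_one ?_
    calc |(u : ℝ)| = |(u + v * t) - v * t| := by ring_nf
      _ ≤ |u + v * t| + |(v : ℝ)| * t := by grw [abs_sub, abs_mul, abs_of_pos ht0]
      _ < 1 := by nlinarith
  subst hu
  refine ⟨rfl, Int.eq_zero_of_abs_cast_lt_one ?_⟩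
  rw [Int.cast_zero, zero_add, abs_mul, abs_of_pos ht0] at hι
  exact lt_of_mul_lt_mul_right (by linarith) ht0.le

theorem eq_zero_of_abs_lt_of_norm_form_lt {t c : ℝ} {u v w : ℤ} (ht : t < 1 / 3) (hc : 3 ≤ c)
    (hι : |u + v * t + w * t ^ 2| < t)
    (hτ : (u - w * (t ^ 2 + c)) ^ 2 - (u - w * (t ^ 2 + c)) * (v - w * t) * t
      + (v - w * t) ^ 2 * (t ^ 2 + c) < t ^ 2 + c) :
    u = 0 ∧ v = 0 ∧ w = 0 := by
  have hRC : (u - w * (t ^ 2 + c) - (v - w * t) * t / 2) ^ 2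
      + ((v : ℝ) - w * t) ^ 2 * (3 * t ^ 2 / 4 + c) < t ^ 2 + c := by
    linear_combination hτ
  have hC : ((v : ℝ) - w * t) ^ 2 < 4 / 3 := by nlinarith [sq_nonneg t]
  obtain rfl := coeff_sq_eq_zero_of_abs_lt_of_sq_lt ht hc hι (by nlinarith) hC
  simp only [Int.cast_zero, zero_mul, add_zero, sub_zero] at hι hC
  exact (eq_zero_of_abs_add_mul_lt ht hι hC).imp_right (⟨·, rfl⟩)

theorem cubic_trinomial_theta_is_lattice_minimum_general
    (r b : ℕ) (hr : 1 ≤ r)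
    (L : Type*) [Field L] [NumberField L] (θ : 𝓞 L)
    (hroot : (θ : L) ^ 3 + ((3 * r * b : ℕ) : L) * (θ : L) - (b : L) = 0)
    (hgen : IntermediateField.adjoin ℚ {((θ : L))} = ⊤)
    (hmono : Algebra.adjoin ℤ {((θ : L))} = integralClosure ℤ L)
    (ι : L →+* ℝ) (τ : L →+* ℂ) (hτ : ¬ NumberField.ComplexEmbedding.IsReal τ) :
    ¬ ∃ ν : 𝓞 L, ν ≠ 0 ∧ |ι ((ν : L))| < ι ((θ : L)) ∧
      ‖τ ((ν : L))‖ < ‖τ ((θ : L))‖ := by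
  rintro ⟨ν, hν0, hιν, hτν⟩
  obtain ⟨u, v, w, hν⟩ := exists_int_eq_of_mem_adjoin_of_cubic (A := (3 * r * b : ℕ)) (B := b)
    (by exact_mod_cast hroot) (hmono ▸ ν.2 : (ν : L) ∈ Algebra.adjoin ℤ {(θ : L)})
  set c : ℝ := ((3 * r * b : ℕ) : ℝ)
  set t := ι θ
  set z := τ θ
  have hιθ : t ^ 3 + c * t - b = 0 := by
    simpa only [map_sub, map_add, map_mul, map_pow, map_natCast, map_zero] using congr(ι $hroot)
  have hτθ : z ^ 3 + ((3 * r * b : ℕ) : ℂ) * z - b = 0 := by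
    simpa only [map_sub, map_add, map_mul, map_pow, map_natCast, map_zero] using congr(τ $hroot)
  obtain ⟨ht, hc⟩ := lt_one_third_and_three_le_of_cubic hr ((abs_nonneg _).trans_lt hιν) hιθ
  have hne : z ≠ t := fun h ↦ hτ (ComplexEmbedding.isReal_of_adjoin_eq_top hgen (by simp [z, h]))
  have hz : z ^ 2 + t * z + ((t ^ 2 + c : ℝ) : ℂ) = 0 := by
    exact_mod_cast sq_add_mul_add_eq_zero_of_cubic (by exact_mod_cast hιθ) hτθ hne
  have hτν' : ‖(u + v * z + w * z ^ 2 : ℂ)‖ < ‖z‖ := by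
    simpa [hν] using hτν
  obtain ⟨rfl, rfl, rfl⟩ := eq_zero_of_abs_lt_of_norm_form_lt ht hc (by simpa [hν] using hιν)
    (Complex.norm_form_lt_of_norm_lt (by nlinarith) hz hτν')
  exact hν0 (by simpa using hν)

/-- Let `r ≥ 1` and `b ≥ 2` with `b` squarefree, such that `P(X) = X³ + 3rbX − b ∈ ℤ[X]`
is irreducible over `ℚ` and monogenic for the real root `θ` of `P` generating `L = ℚ(θ)`.
Let `ι : L → ℝ` be the real embedding and `τ : L → ℂ` a complex (non-real) embedding.
Then there is no nonzero `ν ∈ 𝓞 L` with `|ι ν| < ι θ` and `|τ ν| < |τ θ|`; that is, `θ` is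
always a lattice minimum of `𝓞 L`. -/
theorem cubic_trinomial_theta_is_lattice_minimum
    (r b : ℕ) (hr : 1 ≤ r) (hb : 2 ≤ b) (hsf : Squarefree b)
    (L : Type*) [Field L] [NumberField L] (θ : 𝓞 L)
    (hroot : (θ : L) ^ 3 + ((3 * r * b : ℕ) : L) * (θ : L) - (b : L) = 0)
    (hirr : Irreducible
      ((X ^ 3 + C ((3 * r * b : ℕ) : ℤ) * X - C ((b : ℕ) : ℤ) : Polynomial ℤ).map
        (Int.castRingHom ℚ)))
    (hgen : IntermediateField.adjoin ℚ {((θ : L))} = ⊤)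
    (hmono : Algebra.adjoin ℤ {((θ : L))} = integralClosure ℤ L)
    (ι : L →+* ℝ) (τ : L →+* ℂ) (hτ : ¬ NumberField.ComplexEmbedding.IsReal τ) :
    ¬ ∃ ν : 𝓞 L, ν ≠ 0 ∧ |ι ((ν : L))| < ι ((θ : L)) ∧
      ‖τ ((ν : L))‖ < ‖τ ((θ : L))‖ :=
  cubic_trinomial_theta_is_lattice_minimum_general r b hr L θ hroot hgen hmono ι τ hτ
end

section
/- Let r ≥ 1 and b ≥ 2 be integers with b squarefree, and let θ be a root of the irreducible trinomial P(X) = X³ + 3rbX − b ∈ ℤ[X]. Let x, y, z ∈ ℤ and set φ = x + yθ + zθ². If b² divides the norm N_{L/ℚ}(φ), then b divides x, b divides y, and z³ ≡ N_{L/ℚ}(φ)/b² (mod b). -/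
open NumberField Polynomial

/-!
If `θ³ + sθ - t = 0` generates a cubic field, the matrix of multiplication by
`φ = x + yθ + zθ²` in the basis `1, θ, θ²` has determinant `trinomialNormForm s t x y z`.
For `s = 3rb`, `t = b` every term of this form except `x³` is divisible by `b`, so `b ∣ x³`, hence
`b ∣ x` as `b` is squarefree. Substituting `x = bx'`, the form is `by³` modulo `b²`, so `b ∣ y`;
substituting `y = by'` as well, it becomes `b²(z³ + bc)`, so `N / b² ≡ z³ (mod b)`.
-/

def trinomialNormForm {R : Type*} [CommRing R] (s t x y z : R) : R :=
  x ^ 3 + t * y ^ 3 + t ^ 2 * z ^ 3 - 3 * t * x * y * z + s * (x * y ^ 2 - 2 * x ^ 2 * z)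
    + s ^ 2 * x * z ^ 2 + s * t * y * z ^ 2

@[simp, norm_cast]
theorem Int.cast_trinomialNormForm {R : Type*} [CommRing R] (s t x y z : ℤ) :
    ((trinomialNormForm s t x y z : ℤ) : R) = trinomialNormForm (s : R) t x y z := by
  simp [trinomialNormForm]

theorem Algebra.leftMulMatrix_eq_of_mul_eq_sum {ι R S : Type*} [Fintype ι] [DecidableEq ι]
    [CommRing R] [Ring S] [Algebra R S] (B : Module.Basis ι R S) {a : S} {M : Matrix ι ι R}
    (h : ∀ j, a * B j = ∑ i, M i j • B i) : Algebra.leftMulMatrix B a = M := by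
  ext i j
  rw [Algebra.leftMulMatrix_eq_repr_mul, h, B.repr_sum_self]

section Norm

variable {K L : Type*} [Field K] [Field L] [Algebra K L]

theorem leftMulMatrix_add_mul_add_mul_sq {θ : L} {s t : K}
    (hθ : θ ^ 3 + algebraMap K L s * θ - algebraMap K L t = 0)
    (B : Module.Basis (Fin 3) K L) (hB : ∀ i, B i = θ ^ (i : ℕ)) (x y z : K) :
    Algebra.leftMulMatrix B
        (algebraMap K L x + algebraMap K L y * θ + algebraMap K L z * θ ^ 2) =
      !![x, z * t, y * t; y, x - z * s, z * t - y * s; z, y, x - z * s] := by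
  refine Algebra.leftMulMatrix_eq_of_mul_eq_sum B fun j => ?_
  fin_cases j <;>
    simp only [Fin.sum_univ_three, hB, Algebra.smul_def, map_mul, map_sub, Fin.isValue,
      Fin.zero_eta, Fin.mk_one, Fin.reduceFinMk, Fin.coe_ofNat_eq_mod, Nat.zero_mod, Nat.one_mod,
      Nat.mod_succ, pow_zero, pow_one, mul_one, Matrix.of_apply, Matrix.cons_val',
      Matrix.cons_val_zero, Matrix.cons_val_one, Matrix.cons_val, Matrix.cons_val_fin_one]
  · linear_combination algebraMap K L z * hθ
  · linear_combination (algebraMap K L y + algebraMap K L z * θ) * hθ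

theorem norm_add_mul_add_mul_sq_eq_trinomialNormForm {θ : L} {s t : K}
    (hmin : minpoly K θ = X ^ 3 + C s * X - C t)
    (hgen : IntermediateField.adjoin K {θ} = ⊤) (x y z : K) :
    Algebra.norm K (algebraMap K L x + algebraMap K L y * θ + algebraMap K L z * θ ^ 2) =
      trinomialNormForm s t x y z := by
  have hdeg : (minpoly K θ).natDegree = 3 := by rw [hmin]; compute_degree!
  have hint : IsIntegral K θ := minpoly.ne_zero_iff.mp fun h => by simp [h] at hdeg
  have hθ : θ ^ 3 + algebraMap K L s * θ - algebraMap K L t = 0 := by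
    simpa [hmin] using minpoly.aeval K θ
  have hfinrank : Module.finrank K L = 3 := by
    rw [← hdeg, ← IntermediateField.adjoin.finrank hint, hgen, IntermediateField.finrank_top']
  have hli : LinearIndependent K fun i : Fin 3 => θ ^ (i : ℕ) := by
    rw [← hdeg]
    exact linearIndependent_pow θ
  let B := basisOfLinearIndependentOfCardEqFinrank hli (by simp [hfinrank])
  rw [Algebra.norm_eq_matrix_det B,
    leftMulMatrix_add_mul_add_mul_sq hθ B (by simp [B]), Matrix.det_fin_three]
  simp only [Fin.isValue, Matrix.of_apply, Matrix.cons_val', Matrix.cons_val_zero,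
    Matrix.cons_val_fin_one, Matrix.cons_val_one, Matrix.cons_val, trinomialNormForm]
  ring

end Norm

theorem dvd_and_dvd_and_modEq_of_sq_dvd_trinomialNormForm {s b x y z : ℤ} (hsf : Squarefree b)
    (hs : b ∣ s) (h : b ^ 2 ∣ trinomialNormForm s b x y z) :
    b ∣ x ∧ b ∣ y ∧ z ^ 3 ≡ trinomialNormForm s b x y z / b ^ 2 [ZMOD b] := by
  obtain ⟨u, rfl⟩ := hs
  have hb : b ≠ 0 := hsf.ne_zero
  have hx : b ∣ x := by
    have hF : b ∣ trinomialNormForm (b * u) b x y z := (dvd_pow_self b two_ne_zero).trans h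
    have hF_sub : b ∣ trinomialNormForm (b * u) b x y z - x ^ 3 :=
      ⟨y ^ 3 + b * z ^ 3 - 3 * x * y * z + u * (x * y ^ 2 - 2 * x ^ 2 * z)
        + b * u ^ 2 * x * z ^ 2 + b * u * y * z ^ 2, by unfold trinomialNormForm; ring⟩
    exact (hsf.dvd_pow_iff_dvd three_ne_zero).mp ((dvd_sub_right hF).mp hF_sub)
  obtain ⟨x, rfl⟩ := hx
  have hy : b ∣ y := by
    have hF_sub : b ^ 2 ∣ trinomialNormForm (b * u) b (b * x) y z - b * y ^ 3 :=
      ⟨b * x ^ 3 + z ^ 3 - 3 * x * y * z + u * x * y ^ 2 - 2 * b * u * x ^ 2 * z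
        + b * u ^ 2 * x * z ^ 2 + u * y * z ^ 2, by unfold trinomialNormForm; ring⟩
    have : b * b ∣ b * y ^ 3 := by rw [← sq]; exact (dvd_sub_right h).mp hF_sub
    exact (hsf.dvd_pow_iff_dvd three_ne_zero).mp ((mul_dvd_mul_iff_left hb).mp this)
  obtain ⟨y, rfl⟩ := hy
  set c := x ^ 3 + b * y ^ 3 - 3 * x * y * z + b * u * x * y ^ 2 - 2 * u * x ^ 2 * z
    + u ^ 2 * x * z ^ 2 + u * y * z ^ 2
  have hF : trinomialNormForm (b * u) b (b * x) (b * y) z = b ^ 2 * (z ^ 3 + b * c) := by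
    unfold trinomialNormForm; ring
  refine ⟨dvd_mul_right b x, dvd_mul_right b y, ?_⟩
  rw [hF, Int.mul_ediv_cancel_left _ (pow_ne_zero 2 hb)]
  exact Int.modEq_iff_dvd.mpr ⟨c, by ring⟩

theorem cubic_trinomial_norm_divisibility_general
    (r b : ℤ) (hsf : Squarefree b)
    (L : Type*) [Field L] [NumberField L] (θ : L)
    (hroot : θ ^ 3 + ((3 * r * b : ℤ) : L) * θ - (b : L) = 0)
    (hirr : Irreducible
      ((X ^ 3 + C (3 * r * b) * X - C b : Polynomial ℤ).map (Int.castRingHom ℚ)))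
    (hgen : IntermediateField.adjoin ℚ {θ} = ⊤)
    (x y z : ℤ) (N : ℤ)
    (hN : (N : ℚ) = Algebra.norm ℚ ((x : L) + (y : L) * θ + (z : L) * θ ^ 2))
    (hdvd : b ^ 2 ∣ N) :
    b ∣ x ∧ b ∣ y ∧ z ^ 3 ≡ N / b ^ 2 [ZMOD b] := by
  have hP : (X ^ 3 + C (3 * r * b) * X - C b : ℤ[X]).map (Int.castRingHom ℚ) =
      X ^ 3 + C ((3 * r * b : ℤ) : ℚ) * X - C (b : ℚ) := by
    simp only [Polynomial.map_sub, Polynomial.map_add, Polynomial.map_pow, Polynomial.map_mul,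
      Polynomial.map_X, Polynomial.map_C, Int.coe_castRingHom]
  have hmin : minpoly ℚ θ = X ^ 3 + C ((3 * r * b : ℤ) : ℚ) * X - C (b : ℚ) := by
    refine (minpoly.eq_of_irreducible_of_monic (hP ▸ hirr) ?_ (by monicity!)).symm
    simpa using hroot
  have hNF : N = trinomialNormForm (3 * r * b) b x y z := by
    have := norm_add_mul_add_mul_sq_eq_trinomialNormForm (L := L) hmin hgen x y z
    rw [map_intCast, map_intCast, map_intCast, ← hN] at this
    exact_mod_cast this
  rw [hNF] at hdvd ⊢
  exact dvd_and_dvd_and_modEq_of_sq_dvd_trinomialNormForm hsf (dvd_mul_left b _) hdvd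

/-- Let `r ≥ 1`, `b ≥ 2` squarefree, and `θ` a root of the irreducible trinomial
`P(X) = X³ + 3rbX − b ∈ ℤ[X]` generating `L = ℚ(θ)`. Let `x, y, z ∈ ℤ`,
`φ = x + yθ + zθ²`, and let `N ∈ ℤ` be the norm `N_{L/ℚ}(φ)`. If `b² ∣ N`, then `b ∣ x`,
`b ∣ y`, and `z³ ≡ N / b² (mod b)`. -/
theorem cubic_trinomial_norm_divisibility
    (r b : ℤ) (hr : 1 ≤ r) (hb : 2 ≤ b) (hsf : Squarefree b)
    (L : Type*) [Field L] [NumberField L] (θ : L)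
    (hroot : θ ^ 3 + ((3 * r * b : ℤ) : L) * θ - (b : L) = 0)
    (hirr : Irreducible
      ((X ^ 3 + C (3 * r * b) * X - C b : Polynomial ℤ).map (Int.castRingHom ℚ)))
    (hgen : IntermediateField.adjoin ℚ {θ} = ⊤)
    (x y z : ℤ) (N : ℤ)
    (hN : (N : ℚ) = Algebra.norm ℚ ((x : L) + (y : L) * θ + (z : L) * θ ^ 2))
    (hdvd : b ^ 2 ∣ N) :
    b ∣ x ∧ b ∣ y ∧ z ^ 3 ≡ N / b ^ 2 [ZMOD b] :=
  cubic_trinomial_norm_divisibility_general r b hsf L θ hroot hirr hgen x y z N hN hdvd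
end

section
/- Let r, b be positive integers and let θ be the real root of the irreducible trinomial P(X) = X³ + 3rbX − b ∈ ℤ[X], L = ℚ(θ); let ι : L → ℝ be the real embedding and τ : L → ℂ a complex embedding. Let x, y, z ∈ ℤ and set φ = x + yθ + zθ². If 0 < ι(φ) < b and |τ(φ)| < b, then the following three estimates hold: |x − 2rbz| < b, |3z − 6ry| < 1 + 2√(3rb + 1), and |6r²bz + y − 2rx| < 1 + 2rb. -/
/-! With `A = ι θ` and `B = τ θ`, the roots of `X³ + cX - d` (`c = 3rb`, `d = b`) are `A`, `B`,
`conj B`, so `B + conj B = -A` and `|B|² = A² + c`. Up to the factors `3`, `b`, `3b`, the three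
quantities to bound are the traces of `φ`, `θφ`, `θ²φ`: by Newton's identities they equal
`x pₖ + y pₖ₊₁ + z pₖ₊₂` for the power sums `pₖ = Aᵏ + 2 Re Bᵏ`, and they also equal
`Aᵏ ι φ + 2 Re (Bᵏ τ φ)`, which is less than `b + 2 |B|ᵏ b` in absolute value since `0 < A < 1`. -/

open NumberField Polynomial ComplexConjugate

namespace DepressedCubic

variable {c d A : ℝ} {B : ℂ}

theorem root_mem_Ioo (hd : 0 < d) (hdc : d ≤ c) (hA : A ^ 3 + c * A - d = 0) :
    0 < A ∧ A < 1 := by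
  constructor <;> nlinarith [sq_nonneg A]

theorem quadratic_factor_eq_zero (hA : A ^ 3 + c * A - d = 0) (hB : B ^ 3 + c * B - d = 0)
    (hBA : B ≠ A) : B ^ 2 + A * B + (A ^ 2 + c) = 0 := by
  have hA' : (A : ℂ) ^ 3 + c * A - d = 0 := by exact_mod_cast congrArg Complex.ofReal hA
  have : (B - A) * (B ^ 2 + A * B + (A ^ 2 + c)) = 0 := by linear_combination hB - hA'
  exact (mul_eq_zero.mp this).resolve_left (sub_ne_zero.mpr hBA)

theorem conj_eq_neg_sub (hA : A ^ 3 + c * A - d = 0) (hB : B ^ 3 + c * B - d = 0)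
    (hBr : conj B ≠ B) : conj B = -A - B := by
  have hq := quadratic_factor_eq_zero hA hB (fun h => hBr (by rw [h, Complex.conj_ofReal]))
  have hqc : conj B ^ 2 + A * conj B + (A ^ 2 + c) = 0 := by
    simpa using congrArg conj hq
  have : (conj B - B) * (conj B + B + A) = 0 := by linear_combination hqc - hq
  linear_combination (mul_eq_zero.mp this).resolve_left (sub_ne_zero.mpr hBr)

theorem sq_norm_eq (hA : A ^ 3 + c * A - d = 0) (hB : B ^ 3 + c * B - d = 0)
    (hBr : conj B ≠ B) : ‖B‖ ^ 2 = A ^ 2 + c := by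
  have hq := quadratic_factor_eq_zero hA hB (fun h => hBr (by rw [h, Complex.conj_ofReal]))
  have : ((‖B‖ ^ 2 : ℝ) : ℂ) = ((A ^ 2 + c : ℝ) : ℂ) := by
    push_cast
    rw [← Complex.mul_conj', conj_eq_neg_sub hA hB hBr]
    linear_combination -hq
  exact_mod_cast this

def powerSum (A : ℝ) (B : ℂ) (k : ℕ) : ℝ := A ^ k + 2 * (B ^ k).re

theorem powerSum_add_three (hA : A ^ 3 + c * A - d = 0) (hB : B ^ 3 + c * B - d = 0) (k : ℕ) :
    powerSum A B (k + 3) = d * powerSum A B k - c * powerSum A B (k + 1) := by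
  have hBk : B ^ (k + 3) = d * B ^ k - c * B ^ (k + 1) := by linear_combination B ^ k * hB
  simp only [powerSum, hBk, Complex.sub_re, Complex.re_ofReal_mul]
  linear_combination A ^ k * hA

theorem powerSum_one (hA : A ^ 3 + c * A - d = 0) (hB : B ^ 3 + c * B - d = 0)
    (hBr : conj B ≠ B) : powerSum A B 1 = 0 := by
  have := congrArg Complex.re (conj_eq_neg_sub hA hB hBr)
  simp only [Complex.conj_re, Complex.sub_re, Complex.neg_re, Complex.ofReal_re] at this
  simp only [powerSum, pow_one]
  linarith

theorem powerSum_two (hA : A ^ 3 + c * A - d = 0) (hB : B ^ 3 + c * B - d = 0)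
    (hBr : conj B ≠ B) : powerSum A B 2 = -2 * c := by
  have h1 := powerSum_one hA hB hBr
  have hn := sq_norm_eq hA hB hBr
  simp only [powerSum, pow_one] at h1 ⊢
  rw [Complex.sq_norm, Complex.normSq_apply] at hn
  rw [pow_two B, Complex.mul_re]
  linear_combination -2 * hn + (2 * B.re - A) * h1

theorem pow_mul_add_two_re_pow_mul (x y z : ℝ) (k : ℕ) :
    A ^ k * (x + y * A + z * A ^ 2) + 2 * (B ^ k * (x + y * B + z * B ^ 2)).re =
      x * powerSum A B k + y * powerSum A B (k + 1) + z * powerSum A B (k + 2) := by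
  have : B ^ k * (x + y * B + z * B ^ 2) = x * B ^ k + y * B ^ (k + 1) + z * B ^ (k + 2) := by ring
  simp only [this, powerSum, Complex.add_re, Complex.re_ofReal_mul]
  ring

theorem abs_pow_mul_add_two_re_lt {u β : ℝ} {w : ℂ} (hA : |A| ≤ 1) (hu : |u| < β)
    (hw : ‖w‖ ≤ β) (k : ℕ) : |A ^ k * u + 2 * (B ^ k * w).re| < β + 2 * (‖B‖ ^ k * β) := by
  have hAu : |A ^ k * u| < β := by
    rw [abs_mul, abs_pow]
    exact (mul_le_of_le_one_left (abs_nonneg u) (pow_le_one₀ (abs_nonneg A) hA)).trans_lt hu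
  have hBw : |(B ^ k * w).re| ≤ ‖B‖ ^ k * β := by
    calc |(B ^ k * w).re| ≤ ‖B ^ k * w‖ := Complex.abs_re_le_norm _
      _ = ‖B‖ ^ k * ‖w‖ := by rw [norm_mul, norm_pow]
      _ ≤ ‖B‖ ^ k * β := by gcongr
  calc |A ^ k * u + 2 * (B ^ k * w).re| ≤ |A ^ k * u| + 2 * |(B ^ k * w).re| := by
        simpa [abs_mul] using abs_add_le (A ^ k * u) (2 * (B ^ k * w).re)
    _ < β + 2 * (‖B‖ ^ k * β) := by linarith

theorem abs_traces_lt (hA : A ^ 3 + c * A - d = 0) (hB : B ^ 3 + c * B - d = 0)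
    (hBr : conj B ≠ B) (hA1 : |A| ≤ 1) {x y z β : ℝ} (hu : |x + y * A + z * A ^ 2| < β)
    (hw : ‖(x + y * B + z * B ^ 2 : ℂ)‖ ≤ β) :
    |3 * x - 2 * c * z| < 3 * β ∧
    |3 * d * z - 2 * c * y| < β + 2 * (‖B‖ * β) ∧
    |3 * d * y - 2 * c * x + 2 * c ^ 2 * z| < β + 2 * ((A ^ 2 + c) * β) := by
  have p0 : powerSum A B 0 = 3 := by norm_num [powerSum]
  have p1 := powerSum_one hA hB hBr
  have p2 := powerSum_two hA hB hBr
  have p3 : powerSum A B 3 = 3 * d := by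
    rw [powerSum_add_three hA hB 0, p0, zero_add, p1]; ring
  have p4 : powerSum A B 4 = 2 * c ^ 2 := by
    rw [powerSum_add_three hA hB 1, p1, p2]; ring
  have bound k := abs_pow_mul_add_two_re_lt (B := B) hA1 hu hw k
  simp only [pow_mul_add_two_re_pow_mul] at bound
  refine ⟨?_, ?_, ?_⟩
  · convert bound 0 using 2
    · simp only [Nat.reduceAdd, p0, p1, p2]; ring
    · ring
  · convert bound 1 using 2
    · simp only [Nat.reduceAdd, p1, p2, p3]; ring
    · ring
  · convert bound 2 using 2
    · simp only [Nat.reduceAdd, p2, p3, p4]; ring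
    · rw [sq_norm_eq hA hB hBr]

end DepressedCubic

theorem NumberField.ComplexEmbedding.conj_apply_ne_of_adjoin_eq_top {L : Type*} [Field L]
    [NumberField L] {θ : L} (hgen : IntermediateField.adjoin ℚ {θ} = ⊤) {τ : L →+* ℂ}
    (hτ : ¬ IsReal τ) : conj (τ θ) ≠ τ θ := by
  refine fun h => hτ (isReal_iff.mpr (RingHom.ext fun a => ?_))
  have hadj :=
    Algebra.adjoin_eq_top_of_primitive_element (IsIntegral.of_finite ℚ θ).isAlgebraic hgen
  exact AlgHom.congr_fun (AlgHom.ext_of_adjoin_eq_top hadj (φ₁ := (conjugate τ).toRatAlgHom)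
    (φ₂ := τ.toRatAlgHom) (by simpa using h)) a

open DepressedCubic in
theorem cubic_trinomial_crucial_estimates_general
    (r b : ℕ) (hr : 0 < r) (hb : 0 < b)
    (L : Type*) [Field L] [NumberField L] (θ : L)
    (hroot : θ ^ 3 + ((3 * r * b : ℕ) : L) * θ - (b : L) = 0)
    (hgen : IntermediateField.adjoin ℚ {θ} = ⊤)
    (ι : L →+* ℝ) (τ : L →+* ℂ) (hτ : ¬ NumberField.ComplexEmbedding.IsReal τ)
    (x y z : ℤ)
    (hpos : 0 < ι ((x : L) + (y : L) * θ + (z : L) * θ ^ 2))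
    (hlt : ι ((x : L) + (y : L) * θ + (z : L) * θ ^ 2) < b)
    (habs : ‖τ ((x : L) + (y : L) * θ + (z : L) * θ ^ 2)‖ < b) :
    |(x : ℝ) - 2 * (r : ℝ) * (b : ℝ) * (z : ℝ)| < (b : ℝ) ∧
    |3 * (z : ℝ) - 6 * (r : ℝ) * (y : ℝ)| < 1 + 2 * Real.sqrt (3 * (r : ℝ) * (b : ℝ) + 1) ∧
    |6 * (r : ℝ) ^ 2 * (b : ℝ) * (z : ℝ) + (y : ℝ) - 2 * (r : ℝ) * (x : ℝ)| < 1 + 2 * (r : ℝ) * (b : ℝ) := by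
  have hA : ι θ ^ 3 + (3 * r * b : ℝ) * ι θ - b = 0 := by
    simpa [map_ofNat] using congrArg ι hroot
  have hB : τ θ ^ 3 + ((3 * r * b : ℝ) : ℂ) * τ θ - (b : ℝ) = 0 := by
    simpa [map_ofNat] using congrArg τ hroot
  have hBr := ComplexEmbedding.conj_apply_ne_of_adjoin_eq_top hgen hτ
  have hb' : (1 : ℝ) ≤ b := by exact_mod_cast hb
  have hr' : (1 : ℝ) ≤ r := by exact_mod_cast hr
  obtain ⟨hA0, hA1⟩ := root_mem_Ioo (by positivity) (by nlinarith) hA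
  have hu : |(x : ℝ) + y * ι θ + z * ι θ ^ 2| < b := by
    simp only [map_add, map_mul, map_pow, map_intCast] at hpos hlt
    exact abs_lt.mpr ⟨by linarith, hlt⟩
  have hw : ‖((x : ℝ) + (y : ℝ) * τ θ + (z : ℝ) * τ θ ^ 2 : ℂ)‖ ≤ b := by
    simpa using habs.le
  obtain ⟨h0, h1, h2⟩ := abs_traces_lt hA hB hBr (abs_le.mpr ⟨by linarith, hA1.le⟩) hu hw
  have hnorm : ‖τ θ‖ ≤ Real.sqrt (3 * r * b + 1) := by
    rw [← Real.sqrt_sq (norm_nonneg _), sq_norm_eq hA hB hBr]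
    exact Real.sqrt_le_sqrt (by nlinarith)
  have hb0 : (0 : ℝ) < b := by positivity
  refine ⟨?_, ?_, ?_⟩
  · rw [show (3 * x - 2 * (3 * r * b) * z : ℝ) = 3 * (x - 2 * r * b * z) by ring, abs_mul,
      abs_of_pos three_pos] at h0
    linarith
  · rw [show (3 * b * z - 2 * (3 * r * b) * y : ℝ) = b * (3 * z - 6 * r * y) by ring, abs_mul,
      abs_of_pos hb0] at h1
    refine lt_of_mul_lt_mul_left (h1.trans_le ?_) hb0.le
    nlinarith [mul_le_mul_of_nonneg_right hnorm hb0.le]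
  · rw [show (3 * b * y - 2 * (3 * r * b) * x + 2 * (3 * r * b) ^ 2 * z : ℝ) =
      (3 * b) * (6 * r ^ 2 * b * z + y - 2 * r * x) by ring, abs_mul,
      abs_of_pos (by positivity)] at h2
    refine lt_of_mul_lt_mul_left (h2.trans_le ?_) (by positivity)
    nlinarith [mul_lt_mul_of_pos_right (pow_lt_one₀ hA0.le hA1 two_ne_zero) hb0]

/-- Let `r, b ≥ 1` and let `θ` be the real root of the irreducible trinomial
`P(X) = X³ + 3rbX − b ∈ ℤ[X]` generating `L = ℚ(θ)`; let `ι : L → ℝ` be the real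
embedding and `τ : L → ℂ` a complex (non-real) embedding. If `φ = x + yθ + zθ²`
(`x, y, z ∈ ℤ`) satisfies `0 < ι φ < b` and `|τ φ| < b`, then `|x − 2rbz| < b`,
`|3z − 6ry| < 1 + 2√(3rb + 1)` and `|6r²bz + y − 2rx| < 1 + 2rb`. -/
theorem cubic_trinomial_crucial_estimates
    (r b : ℕ) (hr : 0 < r) (hb : 0 < b)
    (L : Type*) [Field L] [NumberField L] (θ : L)
    (hroot : θ ^ 3 + ((3 * r * b : ℕ) : L) * θ - (b : L) = 0)
    (hirr : Irreducible
      ((X ^ 3 + C ((3 * r * b : ℕ) : ℤ) * X - C ((b : ℕ) : ℤ) : Polynomial ℤ).map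
        (Int.castRingHom ℚ)))
    (hgen : IntermediateField.adjoin ℚ {θ} = ⊤)
    (ι : L →+* ℝ) (τ : L →+* ℂ) (hτ : ¬ NumberField.ComplexEmbedding.IsReal τ)
    (x y z : ℤ)
    (hpos : 0 < ι ((x : L) + (y : L) * θ + (z : L) * θ ^ 2))
    (hlt : ι ((x : L) + (y : L) * θ + (z : L) * θ ^ 2) < b)
    (habs : ‖τ ((x : L) + (y : L) * θ + (z : L) * θ ^ 2)‖ < b) :
    |(x : ℝ) - 2 * (r : ℝ) * (b : ℝ) * (z : ℝ)| < (b : ℝ) ∧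
    |3 * (z : ℝ) - 6 * (r : ℝ) * (y : ℝ)| < 1 + 2 * Real.sqrt (3 * (r : ℝ) * (b : ℝ) + 1) ∧
    |6 * (r : ℝ) ^ 2 * (b : ℝ) * (z : ℝ) + (y : ℝ) - 2 * (r : ℝ) * (x : ℝ)| < 1 + 2 * (r : ℝ) * (b : ℝ) :=
  cubic_trinomial_crucial_estimates_general r b hr hb L θ hroot hgen ι τ hτ x y z hpos hlt habs
end

section
/- Let r, b be positive integers and let θ be a root of the irreducible trinomial P(X) = X³ + 3rbX − b ∈ ℤ[X]. Then the element ε = 1 − 3rθ has minimal polynomial M_ε(X) = X³ − 3X² + 3(9r³b + 1)X − 1 over ℚ; in particular ε³ − 3ε² + 3(9r³b + 1)ε − 1 = 0 and N_{L/ℚ}(ε) = 1, where L = ℚ(θ). -/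
open NumberField Polynomial

/-!
Writing `M(X) = (X - 1)³ + 27r³b·X` one checks `M(1 - 3rX) = -27r³·P(X)`, so `ε = 1 - 3rθ` is a
root of the monic cubic `M`. Since `r ≠ 0`, `θ` and `ε` are affine functions of each other, hence
`ℚ(ε) = ℚ(θ)` has degree `3` and `M` is the minimal polynomial of `ε`. The norm of `ε` is then
`((-1)³ · M(0))^[L : ℚ(ε)] = 1`.
-/

open IntermediateField

section

variable {K L : Type*} [Field K] [Field L] [Algebra K L]

theorem IntermediateField.adjoin_simple_algebraMap_sub_mul (c : K) {a : K} (ha : a ≠ 0) (x : L) :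
    K⟮algebraMap K L c - algebraMap K L a * x⟯ = K⟮x⟯ := by
  refine le_antisymm ?_ ?_ <;> rw [adjoin_simple_le_iff]
  · exact sub_mem (algebraMap_mem _ c) (mul_mem (algebraMap_mem _ a) (mem_adjoin_simple_self K x))
  · generalize hy : algebraMap K L c - algebraMap K L a * x = y
    have hx : x = algebraMap K L a⁻¹ * (algebraMap K L c - y) := by
      rw [← hy, map_inv₀]
      field_simp [(map_ne_zero (algebraMap K L)).mpr ha]
      ring
    rw [hx]
    exact mul_mem (algebraMap_mem _ _) (sub_mem (algebraMap_mem _ c) (mem_adjoin_simple_self K y))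

theorem minpoly.natDegree_algebraMap_sub_mul (c : K) {a : K} (ha : a ≠ 0) {x : L}
    (hx : IsIntegral K x) :
    (minpoly K (algebraMap K L c - algebraMap K L a * x)).natDegree = (minpoly K x).natDegree := by
  have hy : IsIntegral K (algebraMap K L c - algebraMap K L a * x) :=
    isIntegral_algebraMap.sub (isIntegral_algebraMap.mul hx)
  rw [← adjoin.finrank hy, ← adjoin.finrank hx, adjoin_simple_algebraMap_sub_mul c ha]

theorem Algebra.norm_eq_neg_one_pow_mul_coeff_zero_minpoly_pow {x : L} (hx : IsIntegral K x) :
    norm K x =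
      ((-1) ^ (minpoly K x).natDegree * (minpoly K x).coeff 0) ^ Module.finrank K⟮x⟯ L := by
  let pb := IntermediateField.adjoin.powerBasis hx
  have hgen := PowerBasis.norm_gen_eq_coeff_zero_minpoly pb
  rw [IntermediateField.adjoin.powerBasis_dim] at hgen
  rw [norm_eq_norm_adjoin]
  simpa [pb, minpoly_gen] using congrArg (· ^ Module.finrank K⟮x⟯ L) hgen

end

theorem cube_relation_one_sub_mul {R : Type*} [CommRing R] (r b θ : R) :
    (1 - 3 * r * θ) ^ 3 - 3 * (1 - 3 * r * θ) ^ 2 + 3 * (9 * r ^ 3 * b + 1) * (1 - 3 * r * θ)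
      - 1 = -27 * r ^ 3 * (θ ^ 3 + 3 * r * b * θ - b) := by
  ring

theorem minpoly_eq_trinomial {L : Type*} [Field L] [CharZero L] (r b : ℤ) (θ : L)
    (hroot : θ ^ 3 + ((3 * r * b : ℤ) : L) * θ - (b : L) = 0)
    (hirr : Irreducible
      ((X ^ 3 + C (3 * r * b) * X - C b : Polynomial ℤ).map (Int.castRingHom ℚ))) :
    minpoly ℚ θ =
      (X ^ 3 + C (3 * r * b) * X - C b : Polynomial ℤ).map (Int.castRingHom ℚ) := by
  refine (minpoly.eq_of_irreducible_of_monic hirr ?_ ((by monicity! : Monic _).map _)).symm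
  rw [← algebraMap_int_eq, aeval_map_algebraMap]
  push_cast at hroot
  simpa [map_ofNat] using hroot

theorem cubic_trinomial_unit_minimal_polynomial_general
    (r b : ℤ) (hr : 0 < r)
    (L : Type*) [Field L] [NumberField L] (θ : L)
    (hroot : θ ^ 3 + ((3 * r * b : ℤ) : L) * θ - (b : L) = 0)
    (hirr : Irreducible
      ((X ^ 3 + C (3 * r * b) * X - C b : Polynomial ℤ).map (Int.castRingHom ℚ))) :
    minpoly ℚ (1 - ((3 * r : ℤ) : L) * θ) =
      X ^ 3 - 3 * X ^ 2 + C ((3 * (9 * r ^ 3 * b + 1) : ℤ) : ℚ) * X - 1 ∧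
    (1 - ((3 * r : ℤ) : L) * θ) ^ 3 - 3 * (1 - ((3 * r : ℤ) : L) * θ) ^ 2
      + ((3 * (9 * r ^ 3 * b + 1) : ℤ) : L) * (1 - ((3 * r : ℤ) : L) * θ) - 1 = 0 ∧
    Algebra.norm ℚ (1 - ((3 * r : ℤ) : L) * θ) = 1 := by
  set ε : L := 1 - ((3 * r : ℤ) : L) * θ with hε_def
  have hrel : ε ^ 3 - 3 * ε ^ 2 + ((3 * (9 * r ^ 3 * b + 1) : ℤ) : L) * ε - 1 = 0 := by
    push_cast at hroot ⊢
    rw [hε_def, Int.cast_mul, Int.cast_ofNat, cube_relation_one_sub_mul, hroot, mul_zero]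
  have hε : ε = algebraMap ℚ L 1 - algebraMap ℚ L ((3 * r : ℤ) : ℚ) * θ := by
    rw [map_one, map_intCast]
  have hdeg : (minpoly ℚ ε).natDegree = 3 := by
    rw [hε, minpoly.natDegree_algebraMap_sub_mul _ (by positivity) (.of_finite ℚ θ),
      minpoly_eq_trinomial r b θ hroot hirr, (by monicity! : Monic _).natDegree_map]
    compute_degree!
  have hmin :
      minpoly ℚ ε = X ^ 3 - 3 * X ^ 2 + C ((3 * (9 * r ^ 3 * b + 1) : ℤ) : ℚ) * X - 1 := by
    refine (eq_of_monic_of_dvd_of_natDegree_le (minpoly.monic (.of_finite ℚ ε)) (by monicity!)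
      (minpoly.dvd ℚ ε ?_) (by rw [hdeg]; compute_degree!)).symm
    simpa [map_ofNat] using hrel
  refine ⟨hmin, hrel, ?_⟩
  rw [Algebra.norm_eq_neg_one_pow_mul_coeff_zero_minpoly_pow (.of_finite ℚ ε), hdeg, hmin]
  norm_num

/-- Let `r, b ≥ 1` and let `θ` be a root of the irreducible trinomial
`P(X) = X³ + 3rbX − b ∈ ℤ[X]` generating `L = ℚ(θ)`. Then `ε = 1 − 3rθ` has minimal
polynomial `X³ − 3X² + 3(9r³b + 1)X − 1` over `ℚ`; in particular
`ε³ − 3ε² + 3(9r³b + 1)ε − 1 = 0` and `N_{L/ℚ}(ε) = 1`. -/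
theorem cubic_trinomial_unit_minimal_polynomial
    (r b : ℤ) (hr : 0 < r) (hb : 0 < b)
    (L : Type*) [Field L] [NumberField L] (θ : L)
    (hroot : θ ^ 3 + ((3 * r * b : ℤ) : L) * θ - (b : L) = 0)
    (hirr : Irreducible
      ((X ^ 3 + C (3 * r * b) * X - C b : Polynomial ℤ).map (Int.castRingHom ℚ)))
    (hgen : IntermediateField.adjoin ℚ {θ} = ⊤) :
    minpoly ℚ (1 - ((3 * r : ℤ) : L) * θ) =
      X ^ 3 - 3 * X ^ 2 + C ((3 * (9 * r ^ 3 * b + 1) : ℤ) : ℚ) * X - 1 ∧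
    (1 - ((3 * r : ℤ) : L) * θ) ^ 3 - 3 * (1 - ((3 * r : ℤ) : L) * θ) ^ 2
      + ((3 * (9 * r ^ 3 * b + 1) : ℤ) : L) * (1 - ((3 * r : ℤ) : L) * θ) - 1 = 0 ∧
    Algebra.norm ℚ (1 - ((3 * r : ℤ) : L) * θ) = 1 :=
  cubic_trinomial_unit_minimal_polynomial_general r b hr L θ hroot hirr
end

section
/- Let r, b be positive integers and let θ be a root of the irreducible trinomial P(X) = X³ + 3rbX − b ∈ ℤ[X]. Then (1 − 3rθ)·((1 + 27r³b) + 3rθ + 9r²θ²) = 1; in particular ε₀ = 1 − 3rθ is a unit of the order ℤ[θ], with inverse ε₀^{−1} = (1 + 27r³b) + 3rθ + 9r²θ². -/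
open NumberField Polynomial

/-- Let `r, b ≥ 1` and let `θ` be a root of the irreducible trinomial
`P(X) = X³ + 3rbX − b ∈ ℤ[X]`. Then
`(1 − 3rθ)·((1 + 27r³b) + 3rθ + 9r²θ²) = 1`; in particular `ε₀ = 1 − 3rθ` is a unit of
the order `ℤ[θ]`, with the displayed element as inverse. -/
theorem cubic_trinomial_unit_inverse
    (r b : ℤ) (hr : 0 < r) (hb : 0 < b)
    (L : Type*) [Field L] [NumberField L] (θ : L)
    (hroot : θ ^ 3 + ((3 * r * b : ℤ) : L) * θ - (b : L) = 0)
    (hirr : Irreducible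
      ((X ^ 3 + C (3 * r * b) * X - C b : Polynomial ℤ).map (Int.castRingHom ℚ))) :
    (1 - ((3 * r : ℤ) : L) * θ) *
      (((1 + 27 * r ^ 3 * b : ℤ) : L) + ((3 * r : ℤ) : L) * θ
        + ((9 * r ^ 2 : ℤ) : L) * θ ^ 2) = 1 ∧
    ∃ ε : (Algebra.adjoin ℤ ({θ} : Set L))ˣ,
      ((ε : Algebra.adjoin ℤ ({θ} : Set L)) : L) = 1 - ((3 * r : ℤ) : L) * θ := by

  have key : (1 - ((3 * r : ℤ) : L) * θ) *
      (((1 + 27 * r ^ 3 * b : ℤ) : L) + ((3 * r : ℤ) : L) * θ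
        + ((9 * r ^ 2 : ℤ) : L) * θ ^ 2) = 1 := by
    push_cast
    push_cast at hroot
    linear_combination (-(27 : L) * (r : L) ^ 3) * hroot
  refine ⟨key, ?_⟩
  have hθ : θ ∈ Algebra.adjoin ℤ ({θ} : Set L) := Algebra.self_mem_adjoin_singleton ℤ θ
  set A := Algebra.adjoin ℤ ({θ} : Set L)
  have hm1 : (1 - ((3 * r : ℤ) : L) * θ) ∈ A :=
    sub_mem (one_mem A) (mul_mem (intCast_mem A _) hθ)
  have hm2 : (((1 + 27 * r ^ 3 * b : ℤ) : L) + ((3 * r : ℤ) : L) * θ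
      + ((9 * r ^ 2 : ℤ) : L) * θ ^ 2) ∈ A :=
    add_mem (add_mem (intCast_mem A _) (mul_mem (intCast_mem A _) hθ))
      (mul_mem (intCast_mem A _) (pow_mem hθ 2))
  refine ⟨⟨⟨_, hm1⟩, ⟨_, hm2⟩, ?_, ?_⟩, rfl⟩
  · exact Subtype.ext key
  · exact Subtype.ext (by rw [mul_comm] at key; exact key)
end

section
/- Let p ≥ 5 be a prime, σ ∈ {−1, +1}, r a positive integer, and q a prime number. Suppose the trinomial P(X) = X^p + σprqX − q ∈ ℤ[X] is irreducible and monogenic, i.e., the ring of integers O_L of L = ℚ(θ) equals ℤ[θ] for a root θ of P. Then the ideal 𝔔 = q·O_L + θ·O_L is the principal ideal θ·O_L generated by θ, it is prime, and q·O_L = 𝔔^p; that is, q is totally ramified in L and θ generates an absolute ambiguous principal ideal of L/ℚ. -/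
open NumberField Polynomial IntermediateField Module

/-!
From `θ ^ p + a q θ = q` with `a = σ p r` one gets `θ ^ p = q (1 - a θ)`, and `1 - a θ` is a unit:
multiplying the geometric series `∑ (a θ) ^ i` by it gives `1 - (a θ) ^ p = 1 - a ^ p q (1 - a θ)`.
Hence `(q) = (θ) ^ p`, and `θ ∣ q` gives `(q, θ) = (θ)`. Taking absolute norms,
`N(θ) ^ p = q ^ n` with `n = [L : ℚ] ≤ p` because `θ` generates `L` and is a root of a degree `p`
polynomial; this forces `N(θ) = q`, so `(θ)` is prime.
-/

theorem Nat.eq_of_pow_eq_prime_pow {a n p q : ℕ} (hq : q.Prime) (hn : 0 < n) (hnp : n ≤ p)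
    (h : a ^ p = q ^ n) : a = q := by
  obtain ⟨k, -, rfl⟩ : ∃ k ≤ n, a = q ^ k :=
    (Nat.dvd_prime_pow hq).1 (h ▸ dvd_pow_self a (by omega))
  have hkp : k * p = n :=
    Nat.pow_right_injective hq.two_le (show q ^ (k * p) = q ^ n by rw [pow_mul, h])
  obtain rfl : k = 1 := by
    rcases k with _ | _ | k
    · omega
    · rfl
    · nlinarith
  exact pow_one q

theorem finrank_le_natDegree_of_adjoin_eq_top {K L : Type*} [Field K] [Field L] [Algebra K L]
    {x : L} (hx : K⟮x⟯ = ⊤) {f : K[X]} (hf : f.Monic) (hfx : aeval x f = 0) :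
    finrank K L ≤ f.natDegree := by
  rw [← finrank_top', ← hx, adjoin.finrank ⟨f, hf, hfx⟩]
  exact natDegree_le_natDegree (minpoly.min K x hf hfx)

theorem finrank_le_of_adjoin_eq_top_of_pow_add_mul_add_eq_zero {K L : Type*} [Field K] [Field L]
    [Algebra K L] {n : ℕ} (hn : 1 < n) {x : L} (hx : K⟮x⟯ = ⊤) (a b : K)
    (h : x ^ n + algebraMap K L a * x + algebraMap K L b = 0) : finrank K L ≤ n := by
  have hdeg : (C a * X + C b).degree < (n : WithBot ℕ) :=
    degree_linear_le.trans_lt (by exact_mod_cast hn)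
  calc finrank K L ≤ (X ^ n + (C a * X + C b)).natDegree :=
        finrank_le_natDegree_of_adjoin_eq_top hx (monic_X_pow_add hdeg)
          (by simpa [add_assoc] using h)
    _ = n := by rw [natDegree_add_eq_left_of_degree_lt (by simpa using hdeg), natDegree_X_pow]

section

variable {R : Type*} [CommRing R] {θ a q : R} {p : ℕ}

theorem isUnit_one_sub_mul_of_pow_add_mul_mul_eq (h : θ ^ p + a * q * θ = q) :
    IsUnit (1 - a * θ) := by
  have hθp : θ ^ p = q * (1 - a * θ) := by linear_combination h
  refine .of_mul_eq_one (∑ i ∈ Finset.range p, (a * θ) ^ i + q * a ^ p) ?_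
  linear_combination (-1 : R) * geom_sum_mul (a * θ) p - a ^ p * hθp

theorem Ideal.span_singleton_eq_span_singleton_pow_of_pow_add_mul_mul_eq
    (h : θ ^ p + a * q * θ = q) : Ideal.span {q} = Ideal.span {θ} ^ p := by
  rw [Ideal.span_singleton_pow,
    ← Ideal.span_singleton_mul_right_unit (isUnit_one_sub_mul_of_pow_add_mul_mul_eq h)]
  congr
  linear_combination -h

theorem dvd_of_pow_add_mul_mul_eq (hp : p ≠ 0) (h : θ ^ p + a * q * θ = q) : θ ∣ q :=
  h ▸ (dvd_pow_self θ hp).add (dvd_mul_left θ _)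

end

theorem Ideal.isPrime_of_span_natCast_eq_pow {K : Type*} [Field K] [NumberField K]
    {I : Ideal (𝓞 K)} {p q : ℕ} (hq : q.Prime) (hK : finrank ℚ K ≤ p)
    (h : Ideal.span {(q : 𝓞 K)} = I ^ p) : I.IsPrime := by
  have hnorm : Ideal.absNorm I ^ p = q ^ finrank ℚ K := by
    rw [← map_pow, ← h, Ideal.absNorm_span_natCast, RingOfIntegers.rank]
  have hI : Ideal.absNorm I = q := Nat.eq_of_pow_eq_prime_pow hq finrank_pos hK hnorm
  exact Ideal.isPrime_of_irreducible_absNorm (hI ▸ hq.prime.irreducible)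

theorem degree_p_trinomial_absolute_principal_factor_general
    (p : ℕ) (hp : p.Prime) (σ : ℤ)
    (r : ℕ) (q : ℕ) (hq : q.Prime)
    (L : Type*) [Field L] [NumberField L] (θ : 𝓞 L)
    (hroot : (θ : L) ^ p + ((σ * (p : ℤ) * (r : ℤ) * (q : ℤ) : ℤ) : L) * (θ : L)
      - (q : L) = 0)
    (hgen : IntermediateField.adjoin ℚ {((θ : L))} = ⊤) :
    (Ideal.span {(q : 𝓞 L), θ} : Ideal (𝓞 L)) = Ideal.span {θ} ∧
    (Ideal.span {(q : 𝓞 L), θ} : Ideal (𝓞 L)).IsPrime ∧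
    (Ideal.span {(q : 𝓞 L)} : Ideal (𝓞 L)) = (Ideal.span {(q : 𝓞 L), θ}) ^ p := by
  have hθ : θ ^ p + ((σ * p * r : ℤ) : 𝓞 L) * q * θ = q := by
    ext
    simp only [map_add, map_mul, map_pow, map_intCast, map_natCast]
    push_cast at hroot ⊢
    linear_combination hroot
  have hspan : Ideal.span {(q : 𝓞 L), θ} = Ideal.span {θ} := by
    rw [Ideal.span_insert, sup_eq_right, Ideal.span_singleton_le_span_singleton]
    exact dvd_of_pow_add_mul_mul_eq hp.ne_zero hθ
  have hq_pow : Ideal.span {(q : 𝓞 L)} = Ideal.span {θ} ^ p :=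
    Ideal.span_singleton_eq_span_singleton_pow_of_pow_add_mul_mul_eq hθ
  have hdeg : finrank ℚ L ≤ p :=
    finrank_le_of_adjoin_eq_top_of_pow_add_mul_add_eq_zero hp.one_lt hgen
      (σ * p * r * q : ℤ) (-q) (by
        simp only [map_neg, map_intCast, map_natCast]
        linear_combination hroot)
  rw [hspan]
  exact ⟨rfl, Ideal.isPrime_of_span_natCast_eq_pow hq hdeg hq_pow, hq_pow⟩

/-- Let `p ≥ 5` be prime, `σ = ±1`, `r ≥ 1`, and `q` a prime number, such that the
trinomial `P(X) = X^p + σprqX − q ∈ ℤ[X]` is irreducible over `ℚ` and monogenic for a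
root `θ` generating `L = ℚ(θ)`. Then the ideal `𝔔 = q·𝓞 L + θ·𝓞 L` is the principal
ideal `θ·𝓞 L`, it is prime, and `q·𝓞 L = 𝔔^p`: `q` is totally ramified in `L` and `θ`
generates an absolute ambiguous principal ideal of `L/ℚ`. -/
theorem degree_p_trinomial_absolute_principal_factor
    (p : ℕ) (hp : p.Prime) (hp5 : 5 ≤ p) (σ : ℤ) (hσ : σ = 1 ∨ σ = -1)
    (r : ℕ) (hr : 0 < r) (q : ℕ) (hq : q.Prime)
    (L : Type*) [Field L] [NumberField L] (θ : 𝓞 L)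
    (hroot : (θ : L) ^ p + ((σ * (p : ℤ) * (r : ℤ) * (q : ℤ) : ℤ) : L) * (θ : L)
      - (q : L) = 0)
    (hirr : Irreducible
      ((X ^ p + C (σ * (p : ℤ) * (r : ℤ) * (q : ℤ)) * X - C (q : ℤ) : Polynomial ℤ).map
        (Int.castRingHom ℚ)))
    (hgen : IntermediateField.adjoin ℚ {((θ : L))} = ⊤)
    (hmono : Algebra.adjoin ℤ {((θ : L))} = integralClosure ℤ L) :
    (Ideal.span {(q : 𝓞 L), θ} : Ideal (𝓞 L)) = Ideal.span {θ} ∧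
    (Ideal.span {(q : 𝓞 L), θ} : Ideal (𝓞 L)).IsPrime ∧
    (Ideal.span {(q : 𝓞 L)} : Ideal (𝓞 L)) = (Ideal.span {(q : 𝓞 L), θ}) ^ p :=
  degree_p_trinomial_absolute_principal_factor_general p hp σ r q hq L θ hroot hgen
end
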